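/- For every integer k ≥ 2, the Riemann zeta function satisfies ζ(k) = (2^{k−1}/(2^{k−1}−1)) · ∑_{n=1}^{∞} H_n^{(k−1)} / (n · 2^n), where H_n^{(k)} denotes the generalized harmonic numbers. -/
import Mathlib

open Finset

/-- The generalized harmonic numbers: `genH k n = H_n^{(k)}`, defined by `H_n^{(0)} = 1`
and `H_n^{(k)} = ∑_{j=1}^{n} H_j^{(k−1)}/j` for `k ≥ 1`. -/
noncomputable def genH : ℕ → ℕ → ℝ
  | 0, _ => 1
  | (k+1), n => ∑ j ∈ Finset.Icc 1 n, genH k j / (j : ℝ)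


-- finite alternating sum
lemma alt_sum (N : ℕ) (hN : N ≠ 0) :
    ∑ j ∈ Finset.range N, (-1:ℝ)^j * (N.choose (j+1) : ℕ) = 1 := by
  have h0 : (∑ i ∈ Finset.range (N+1), (-1:ℝ)^i * (N.choose i : ℕ)) = 0 := by
    have h := Int.alternating_sum_range_choose_of_ne hN
    exact_mod_cast congrArg (fun z : ℤ => (z : ℝ)) h
  rw [Finset.sum_range_succ'] at h0
  simp only [pow_zero, one_mul, Nat.choose_zero_right, Nat.cast_one, pow_succ] at h0
  have : ∑ j ∈ Finset.range N, (-1:ℝ)^j * (N.choose (j+1) : ℕ)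
      = -∑ j ∈ Finset.range N, (-1:ℝ)^j * (-1) * (N.choose (j+1) : ℕ) := by
    rw [← Finset.sum_neg_distrib]
    exact Finset.sum_congr rfl fun j _ => by ring
  rw [this]
  linarith

lemma key_div (m j K : ℕ) :
    ((m:ℝ)+1) * ((m.choose j : ℕ) : ℝ) / ((j:ℝ)+1)^(K+1)
      = (((m+1).choose (j+1) : ℕ) : ℝ) / ((j:ℝ)+1)^K := by
  have h : ((m:ℝ)+1) * (m.choose j : ℕ) = (((m+1).choose (j+1) : ℕ) : ℝ) * ((j:ℝ)+1) := by
    have := Nat.add_one_mul_choose_eq m j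
    exact_mod_cast congrArg (fun z : ℕ => (z : ℝ)) this
  have hj : ((j:ℝ)+1) ≠ 0 := by positivity
  field_simp
  linear_combination ((j:ℝ)+1)^K * h

lemma sum_Icc_one (f : ℕ → ℝ) (n : ℕ) :
    ∑ i ∈ Finset.Icc 1 n, f i = ∑ i ∈ Finset.range n, f (1+i) := by
  rw [← Finset.Ico_add_one_right_eq_Icc, Finset.sum_Ico_eq_sum_range]
  simp

lemma genH_formula (K : ℕ) : ∀ m : ℕ, genH K (m+1)
    = ((m:ℝ)+1) * ∑ j ∈ Finset.range (m+1), (-1:ℝ)^j * (m.choose j : ℕ) / ((j:ℝ)+1)^(K+1) := by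
  induction K with
  | zero =>
    intro m
    show (1:ℝ) = _
    rw [Finset.mul_sum]
    have hcongr : ∀ j ∈ Finset.range (m+1),
        ((m:ℝ)+1) * ((-1:ℝ)^j * (m.choose j : ℕ) / ((j:ℝ)+1)^(0+1))
          = (-1:ℝ)^j * (((m+1).choose (j+1) : ℕ) : ℝ) := by
      intro j _
      have h := key_div m j 0
      rw [pow_zero, div_one] at h
      rw [show ((m:ℝ)+1) * ((-1:ℝ)^j * (m.choose j : ℕ) / ((j:ℝ)+1)^(0+1))
          = (-1:ℝ)^j * (((m:ℝ)+1) * (m.choose j : ℕ) / ((j:ℝ)+1)^(0+1)) from by ring, h]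
    rw [Finset.sum_congr rfl hcongr]
    exact (alt_sum (m+1) (by omega)).symm
  | succ K ih =>
    intro m
    show (∑ i ∈ Finset.Icc 1 (m+1), genH K i / (i:ℝ)) = _
    rw [sum_Icc_one]
    have step1 : ∀ i ∈ Finset.range (m+1), genH K (1+i) / ((1+i : ℕ) : ℝ)
        = ∑ j ∈ Finset.range (m+1), (-1:ℝ)^j * (i.choose j : ℕ) / ((j:ℝ)+1)^(K+1) := by
      intro i hi
      rw [Finset.mem_range] at hi
      rw [add_comm 1 i, ih i]
      push_cast
      rw [mul_comm, mul_div_cancel_right₀ _ (by positivity : ((i:ℝ)+1) ≠ 0)]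
      -- extend the sum from range (i+1) to range (m+1)
      apply Finset.sum_subset (Finset.range_subset_range.2 (by omega))
      intro j _ hj
      rw [Finset.mem_range, not_lt] at hj
      rw [Nat.choose_eq_zero_of_lt (by omega)]
      simp
    rw [Finset.sum_congr rfl step1, Finset.sum_comm]
    rw [Finset.mul_sum]
    apply Finset.sum_congr rfl
    intro j hj
    rw [Finset.mem_range] at hj
    have hsum : ∑ i ∈ Finset.range (m+1), ((i.choose j : ℕ) : ℝ)
        = (((m+1).choose (j+1) : ℕ) : ℝ) := by
      rw [← Nat.sum_Icc_choose m j]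
      push_cast
      symm
      apply Finset.sum_subset
      · intro x hx
        simp only [Finset.mem_Icc] at hx
        simp only [Finset.mem_range]
        omega
      · intro x hxr hx
        simp only [Finset.mem_range] at hxr
        simp only [Finset.mem_Icc, not_and_or, not_le] at hx
        rw [Nat.choose_eq_zero_of_lt (by omega)]
        simp
    calc ∑ i ∈ Finset.range (m+1), (-1:ℝ)^j * (i.choose j : ℕ) / ((j:ℝ)+1)^(K+1)
        = (-1:ℝ)^j * (∑ i ∈ Finset.range (m+1), ((i.choose j : ℕ):ℝ)) / ((j:ℝ)+1)^(K+1) := by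
          rw [Finset.mul_sum, Finset.sum_div]
      _ = (-1:ℝ)^j * ((((m+1).choose (j+1) : ℕ):ℝ) / ((j:ℝ)+1)^(K+1)) := by
          rw [hsum, mul_div_assoc]
      _ = (-1:ℝ)^j * (((m:ℝ)+1) * (m.choose j : ℕ) / ((j:ℝ)+1)^(K+1+1)) := by
          rw [key_div m j (K+1)]
      _ = ((m:ℝ)+1) * ((-1:ℝ)^j * (m.choose j : ℕ) / ((j:ℝ)+1)^(K+1+1)) := by ring

lemma hasSum_choose_half (j : ℕ) :
    HasSum (fun m : ℕ => (m.choose j : ℝ) / 2^(m+1)) 1 := by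
  have h := hasSum_choose_mul_geometric_of_norm_lt_one (𝕜 := ℝ) j (r := 1/2)
    (by rw [Real.norm_eq_abs, abs_of_nonneg (by norm_num)]; norm_num)
  have h2 : HasSum (fun n : ℕ => ((n+j).choose j : ℝ) / 2^(n+j+1)) 1 := by
    have h3 := h.mul_left ((2:ℝ)^(j+1))⁻¹
    have hval : ((2:ℝ)^(j+1))⁻¹ * (1 / (1 - 1/2) ^ (j+1)) = 1 := by
      rw [show (1-1/2:ℝ) = 1/2 by norm_num, div_pow, one_pow, one_div, one_div, inv_inv,
        inv_mul_cancel₀ (by positivity)]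
    rw [hval] at h3
    have hpt : ∀ n : ℕ, ((n+j).choose j : ℝ) / 2^(n+j+1)
        = (2^(j+1))⁻¹ * (((n+j).choose j : ℝ) * (1/2)^n) := by
      intro n
      rw [one_div, inv_pow, div_eq_mul_inv, mul_comm ((2:ℝ)^(j+1))⁻¹, mul_assoc,
        ← mul_inv, ← pow_add, show n + (j + 1) = n + j + 1 by omega]
    simpa only [hpt] using h3
  have h4 := (hasSum_nat_add_iff (f := fun m : ℕ => (m.choose j : ℝ) / 2^(m+1)) j).mp h2
  have hz : ∑ i ∈ Finset.range j, ((i.choose j : ℕ) : ℝ) / 2^(i+1) = 0 := by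
    apply Finset.sum_eq_zero
    intro i hi
    rw [Finset.mem_range] at hi
    rw [Nat.choose_eq_zero_of_lt hi]
    simp
  rwa [hz, add_zero] at h4

set_option maxHeartbeats 1000000 in
/-- For every integer `k ≥ 2`, the Riemann zeta function
`ζ(k) = ∑_{n=1}^{∞} 1/n^k` satisfies
`ζ(k) = (2^{k−1}/(2^{k−1}−1)) ∑_{n=1}^{∞} H_n^{(k−1)}/(n·2^n)`. -/
theorem stmt7 (k : ℕ) (hk : 2 ≤ k) :
    (∑' n : ℕ, 1 / ((n : ℝ) + 1) ^ k)
      = 2 ^ (k - 1) / (2 ^ (k - 1) - 1)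
        * ∑' n : ℕ, genH (k - 1) (n + 1) / (((n : ℝ) + 1) * 2 ^ (n + 1)) := by
  obtain ⟨K, rfl⟩ : ∃ K, k = K + 1 := ⟨k - 1, by omega⟩
  have hK : 1 ≤ K := by omega
  simp only [Nat.add_sub_cancel]
  -- the zeta series
  set a : ℕ → ℝ := fun j => 1 / ((j:ℝ)+1)^(K+1) with ha
  have hsa : Summable a := by
    have h1 : Summable (fun n : ℕ => 1 / (n:ℝ)^(K+1)) :=
      Real.summable_one_div_nat_pow.2 (by omega)
    have h2 := (summable_nat_add_iff 1).2 h1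
    apply h2.congr
    intro n
    push_cast
    rfl
  -- the double-indexed family
  set g : ℕ × ℕ → ℝ :=
    fun p => (-1:ℝ)^p.1 * (p.2.choose p.1 : ℕ) / (((p.1:ℝ)+1)^(K+1) * 2^(p.2+1)) with hg
  have hFnn : ∀ p : ℕ × ℕ, (0:ℝ) ≤ (p.2.choose p.1 : ℕ) / (((p.1:ℝ)+1)^(K+1) * 2^(p.2+1)) := by
    intro p; positivity
  -- row sums (absolute values)
  have hrow : ∀ j : ℕ, HasSum (fun m : ℕ =>
      ((m.choose j : ℕ) : ℝ) / (((j:ℝ)+1)^(K+1) * 2^(m+1))) (a j) := by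
    intro j
    have h := (hasSum_choose_half j).mul_left (1 / ((j:ℝ)+1)^(K+1))
    rw [mul_one] at h
    apply h.congr_fun
    intro m
    rw [div_eq_mul_inv ((m.choose j : ℕ):ℝ), mul_inv, div_eq_mul_inv, div_eq_mul_inv]
    ring
  -- summability of |g|
  have hFsumm : Summable (fun p : ℕ × ℕ =>
      ((p.2.choose p.1 : ℕ) : ℝ) / (((p.1:ℝ)+1)^(K+1) * 2^(p.2+1))) := by
    rw [summable_prod_of_nonneg hFnn]
    constructor
    · intro j
      exact (hrow j).summable
    · apply hsa.congr
      intro j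
      exact ((hrow j).tsum_eq).symm
  have hgsumm : Summable g := by
    apply Summable.of_abs
    apply hFsumm.congr
    intro p
    rw [hg]
    rw [abs_div, abs_mul, abs_pow, abs_neg, abs_one, one_pow, one_mul,
      Nat.abs_cast, abs_of_pos (by positivity)]
  -- row tsums of g
  have hgrow : ∀ j : ℕ, HasSum (fun m : ℕ => g (j, m)) ((-1:ℝ)^j * a j) := by
    intro j
    have h := (hasSum_choose_half j).mul_left ((-1:ℝ)^j / ((j:ℝ)+1)^(K+1))
    rw [mul_one] at h
    have hval : (-1:ℝ)^j / ((j:ℝ)+1)^(K+1) = (-1:ℝ)^j * a j := by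
      simp only [ha]
      rw [mul_one_div]
    rw [hval] at h
    apply h.congr_fun
    intro m
    simp only [hg, ha]
    rw [div_eq_mul_inv, mul_inv]
    ring
  -- eta = sum over j of (-1)^j a j
  have heta : ∑' j : ℕ, (-1:ℝ)^j * a j = ∑' m : ℕ, ∑' j : ℕ, g (j, m) := by
    calc ∑' j : ℕ, (-1:ℝ)^j * a j
        = ∑' j : ℕ, ∑' m : ℕ, g (j, m) := (tsum_congr fun j => ((hgrow j).tsum_eq)).symm
      _ = ∑' m : ℕ, ∑' j : ℕ, g (j, m) :=
          (Summable.tsum_comm (f := fun j m => g (j, m)) (by exact hgsumm)).symm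
  -- inner sums are the genH terms
  have hinner : ∀ m : ℕ, ∑' j : ℕ, g (j, m)
      = genH K (m+1) / (((m:ℝ)+1) * 2^(m+1)) := by
    intro m
    rw [tsum_eq_sum (s := Finset.range (m+1)) (by
      intro j hj
      rw [Finset.mem_range, not_lt] at hj
      simp only [hg]
      rw [Nat.choose_eq_zero_of_lt (by omega)]
      simp)]
    rw [genH_formula K m,
      mul_div_mul_left _ _ (by positivity : ((m:ℝ)+1) ≠ 0), Finset.sum_div]
    apply Finset.sum_congr rfl
    intro j _
    simp only [hg]
    rw [div_div]
  -- even/odd splitting: eta = (1 - 1/2^K) * zeta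
  have hsf : Summable (fun j : ℕ => (-1:ℝ)^j * a j) := by
    apply Summable.of_abs
    apply hsa.congr
    intro j
    rw [abs_mul, abs_pow, abs_neg, abs_one, one_pow, one_mul, abs_of_pos (by positivity : 0 < a j)]
  have hodd : ∀ i : ℕ, a (2*i+1) = (1/2^(K+1)) * a i := by
    intro i
    rw [ha]
    simp only
    have : ((2*i+1 : ℕ) : ℝ) + 1 = 2 * ((i:ℝ)+1) := by push_cast; ring
    rw [this, mul_pow]
    rw [one_div, one_div, one_div, mul_inv]
  have hdiff : ∑' j : ℕ, (a j - (-1:ℝ)^j * a j) = (1/2^K) * ∑' j, a j := by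
    have he : ∀ i : ℕ, a (2*i) - (-1:ℝ)^(2*i) * a (2*i) = 0 := by
      intro i
      have hs : ((-1:ℝ))^(2*i) = 1 := by rw [pow_mul]; norm_num
      rw [hs]; ring
    have ho : ∀ i : ℕ, a (2*i+1) - (-1:ℝ)^(2*i+1) * a (2*i+1) = 2 * ((1/2^(K+1)) * a i) := by
      intro i
      have hs : ((-1:ℝ))^(2*i+1) = -1 := by rw [pow_succ, pow_mul]; norm_num
      rw [hs, hodd i]; ring
    have hsumm_e : Summable (fun i : ℕ => a (2*i) - (-1:ℝ)^(2*i) * a (2*i)) :=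
      summable_zero.congr fun i => (he i).symm
    have hsumm_o : Summable (fun i : ℕ => a (2*i+1) - (-1:ℝ)^(2*i+1) * a (2*i+1)) := by
      have h1 : Summable (fun i : ℕ => (2:ℝ) * (1/2^(K+1) * a i)) :=
        (hsa.mul_left _).mul_left 2
      exact h1.congr fun i => (ho i).symm
    have := tsum_even_add_odd (f := fun j => a j - (-1:ℝ)^j * a j) hsumm_e hsumm_o
    rw [tsum_congr he, tsum_congr ho, tsum_zero, zero_add] at this
    rw [← this, tsum_mul_left, tsum_mul_left, ← mul_assoc]
    congr 1
    rw [pow_succ]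
    ring
  have hzmeta : ∑' j : ℕ, a j - ∑' j : ℕ, (-1:ℝ)^j * a j = (1/2^K) * ∑' j, a j := by
    rw [← Summable.tsum_sub hsa hsf]
    exact hdiff
  -- put it together
  have key : ∑' n : ℕ, genH K (n+1) / (((n:ℝ)+1) * 2^(n+1)) = (1 - 1/2^K) * ∑' j, a j := by
    rw [← tsum_congr hinner, ← heta]
    have : ∑' j : ℕ, (-1:ℝ)^j * a j = ∑' j, a j - (1/2^K) * ∑' j, a j := by
      linarith [hzmeta]
    rw [this]
    ring
  rw [key]
  have h1 : (1:ℝ) < 2^K := by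
    calc (1:ℝ) < 2 := one_lt_two
    _ ≤ 2^K := by
      calc (2:ℝ) = 2^1 := (pow_one 2).symm
      _ ≤ 2^K := pow_le_pow_right₀ one_le_two hK
  have h2 : (2:ℝ)^K - 1 ≠ 0 := by linarith
  have h3 : (2:ℝ)^K ≠ 0 := by positivity
  field_simp
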